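/- There exists an instance with 6 voters that is not integralizable: for N = {1,…,6}, k = 3, types R_c = {{1,2},{1,3},{2,3},{4,5},{4,6},{5,6}} each with supply 1, the utility vector u = (1,1,1,1,1,1) is fractional-committee-feasible (witnessed by x_R = 1/2 for all six types) but not integral-committee-feasible. -/

import Mathlib

/-!
Halving the supply gives every voter utility 1 at total cost 3, since each voter lies in exactly
two of the six supplied pairs. An integral committee can only use supplied pairs, and each of them
lies inside one of the triangles `{0, 1, 2}`, `{3, 4, 5}` and is disjoint from the other. Pairs
covering the three voters of a triangle number at least `⌈3 / 2⌉ = 2`, so covering both triangles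
costs at least `4 > 3`.
-/

/-- Candidate types: non-empty subsets of the voter set `Fin n`. -/
abbrev Typ (n : ℕ) := {S : Finset (Fin n) // S.Nonempty}

/-- Utility of voter `i` under an integral committee `x`. -/
def intUtil {n : ℕ} (x : Typ n → ℕ) (i : Fin n) : ℤ :=
  ∑ R : Typ n, if i ∈ R.1 then (x R : ℤ) else 0

/-- Utility of voter `i` under a fractional committee `x`. -/
def fracUtil {n : ℕ} (x : Typ n → ℝ) (i : Fin n) : ℝ :=
  ∑ R : Typ n, if i ∈ R.1 then x R else 0

/-- `x` is an integral committee for the instance `(c, k)`. -/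
def IsIntCommittee {n : ℕ} (c : Typ n → ℕ) (k : ℕ) (x : Typ n → ℕ) : Prop :=
  (∀ R, x R ≤ c R) ∧ (∑ R : Typ n, x R) ≤ k

/-- `x` is a fractional committee for the instance `(c, k)`. -/
def IsFracCommittee {n : ℕ} (c : Typ n → ℕ) (k : ℕ) (x : Typ n → ℝ) : Prop :=
  (∀ R, 0 ≤ x R) ∧ (∀ R, x R ≤ (c R : ℝ)) ∧ (∑ R : Typ n, x R) ≤ (k : ℝ)

/-- `u` is integral-committee-feasible in `(c, k)`. -/
def IntFeasible {n : ℕ} (c : Typ n → ℕ) (k : ℕ) (u : Fin n → ℤ) : Prop :=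
  ∃ x : Typ n → ℕ, IsIntCommittee c k x ∧ ∀ i, u i ≤ intUtil x i

/-- `u` is fractional-committee-feasible in `(c, k)`. -/
def FracFeasible {n : ℕ} (c : Typ n → ℕ) (k : ℕ) (u : Fin n → ℤ) : Prop :=
  ∃ x : Typ n → ℝ, IsFracCommittee c k x ∧ ∀ i, (u i : ℝ) ≤ fracUtil x i

/-- `(c, k)` is integralizable. -/
def Integralizable {n : ℕ} (c : Typ n → ℕ) (k : ℕ) : Prop :=
  ∀ u : Fin n → ℤ, FracFeasible c k u → IntFeasible c k u

/-- The "two triangles" supply vector on six voters. -/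
def cTwoTriangles : Typ 6 → ℕ := fun R =>
  if R.1 = ({0, 1} : Finset (Fin 6)) ∨ R.1 = ({0, 2} : Finset (Fin 6)) ∨
     R.1 = ({1, 2} : Finset (Fin 6)) ∨ R.1 = ({3, 4} : Finset (Fin 6)) ∨
     R.1 = ({3, 5} : Finset (Fin 6)) ∨ R.1 = ({4, 5} : Finset (Fin 6))
  then 1 else 0


open Finset

section Committee

variable {n : ℕ} (x : Typ n → ℕ)

theorem sum_intUtil_eq_sum_mul_card_inter (T : Finset (Fin n)) :
    ∑ i ∈ T, intUtil x i = ∑ R : Typ n, (x R : ℤ) * #(R.1 ∩ T) := by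
  simp only [intUtil]
  rw [Finset.sum_comm]
  refine sum_congr rfl fun R _ => ?_
  rw [← sum_filter, sum_const, nsmul_eq_mul, mul_comm, filter_mem_eq_inter, inter_comm]

theorem sum_intUtil_le_mul_sum_subset {T : Finset (Fin n)} {m : ℕ}
    (hx : ∀ R, x R ≠ 0 → (R.1 ⊆ T ∧ #R.1 ≤ m) ∨ Disjoint R.1 T) :
    ∑ i ∈ T, intUtil x i ≤ m * ∑ R with R.1 ⊆ T, (x R : ℤ) := by
  rw [sum_intUtil_eq_sum_mul_card_inter, sum_filter, mul_sum]
  refine sum_le_sum fun R _ => ?_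
  rcases eq_or_ne (x R) 0 with h0 | hne
  · simp [h0]
  rcases hx R hne with ⟨hsub, hcard⟩ | hdisj
  · rw [if_pos hsub, inter_eq_left.mpr hsub, mul_comm]
    gcongr
  · rw [disjoint_iff_inter_eq_empty.mp hdisj]
    simp only [card_empty, Nat.cast_zero, mul_zero]
    split_ifs <;> positivity

theorem card_le_mul_sum_subset_of_one_le_intUtil {T : Finset (Fin n)} {m : ℕ}
    (hx : ∀ R, x R ≠ 0 → (R.1 ⊆ T ∧ #R.1 ≤ m) ∨ Disjoint R.1 T)
    (hu : ∀ i ∈ T, 1 ≤ intUtil x i) :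
    #T ≤ m * ∑ R with R.1 ⊆ T, x R := by
  have h := (card_nsmul_le_sum T _ 1 hu).trans (sum_intUtil_le_mul_sum_subset x hx)
  exact_mod_cast (by simpa using h : (#T : ℤ) ≤ m * ∑ R with R.1 ⊆ T, (x R : ℤ))

theorem sum_subset_add_sum_subset_le_sum {T T' : Finset (Fin n)} (h : Disjoint T T') :
    ∑ R with R.1 ⊆ T, x R + ∑ R with R.1 ⊆ T', x R ≤ ∑ R, x R := by
  rw [← sum_union]
  · exact sum_le_sum_of_subset (subset_univ _)
  · refine disjoint_filter.mpr fun R _ hT hT' => ?_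
    obtain ⟨i, hi⟩ := R.2
    exact disjoint_left.mp h (hT hi) (hT' hi)

theorem fracUtil_natCast_div (c : Typ n → ℕ) (d : ℝ) (i : Fin n) :
    fracUtil (fun R => (c R : ℝ) / d) i = ((∑ R, if i ∈ R.1 then c R else 0 : ℕ) : ℝ) / d := by
  rw [fracUtil, Nat.cast_sum, sum_div]
  refine sum_congr rfl fun R _ => ?_
  split_ifs <;> simp

end Committee

theorem cTwoTriangles_subset_or_disjoint {T : Finset (Fin 6)}
    (hT : T = {0, 1, 2} ∨ T = {3, 4, 5}) (R : Typ 6) (hR : cTwoTriangles R ≠ 0) :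
    (R.1 ⊆ T ∧ #R.1 ≤ 2) ∨ Disjoint R.1 T := by
  revert R
  rcases hT with rfl | rfl <;> decide

theorem sum_cTwoTriangles : ∑ R, cTwoTriangles R = 6 := by decide

theorem sum_ite_mem_cTwoTriangles (i : Fin 6) :
    ∑ R, (if i ∈ R.1 then cTwoTriangles R else 0) = 2 := by
  revert i; decide

theorem fracFeasible_cTwoTriangles : FracFeasible cTwoTriangles 3 (fun _ => 1) := by
  refine ⟨fun R => (cTwoTriangles R : ℝ) / 2,
    ⟨fun R => by positivity, fun R => half_le_self (by positivity), ?_⟩, fun i => ?_⟩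
  · rw [← sum_div, ← Nat.cast_sum, sum_cTwoTriangles]
    norm_num
  · rw [fracUtil_natCast_div, sum_ite_mem_cTwoTriangles]
    norm_num

theorem not_intFeasible_cTwoTriangles : ¬ IntFeasible cTwoTriangles 3 (fun _ => 1) := by
  rintro ⟨x, ⟨hc, hk⟩, hu⟩
  have htriangle : ∀ T : Finset (Fin 6), (T = {0, 1, 2} ∨ T = {3, 4, 5}) →
      2 ≤ ∑ R with R.1 ⊆ T, x R := by
    intro T hT
    have hsupp : ∀ R, x R ≠ 0 → (R.1 ⊆ T ∧ #R.1 ≤ 2) ∨ Disjoint R.1 T := fun R hR =>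
      cTwoTriangles_subset_or_disjoint hT R fun h0 => hR (Nat.le_zero.mp (h0 ▸ hc R))
    have h := card_le_mul_sum_subset_of_one_le_intUtil x hsupp fun i _ => hu i
    have hcard : #T = 3 := by rcases hT with rfl | rfl <;> rfl
    omega
  have hsplit := sum_subset_add_sum_subset_le_sum x (T := {0, 1, 2}) (T' := {3, 4, 5}) (by decide)
  have hlow := htriangle _ (.inl rfl)
  have hhigh := htriangle _ (.inr rfl)
  omega

theorem stmt3 :
    FracFeasible cTwoTriangles 3 (fun _ => 1) ∧
    ¬ IntFeasible cTwoTriangles 3 (fun _ => 1) :=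
  ⟨fracFeasible_cTwoTriangles, not_intFeasible_cTwoTriangles⟩
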